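/- Let B = ℚ[X]_{(X)} and A = ℤ + XB ⊆ B. The ideal M = XB of A is not a pure ideal of A; more precisely, Tor₁^A(A/M, ℤ) ≅ M/M² ≠ 0 (where ℤ ≅ A/M as A-modules). -/

import Mathlib

open CategoryTheory CategoryTheory.Limits

noncomputable section

universe u

/-- `pdLE R M n` : the projective dimension of the `R`-module `M` is at most `n`,
expressed by the vanishing of `Ext^{n+1}(M, N)` for all `N`. -/
def pdLE (R : Type u) [CommRing R] (M : Type u) [AddCommGroup M] [Module R M] (n : ℕ) : Prop :=
  ∀ N : ModuleCat.{u} R,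
    IsZero (((Ext R (ModuleCat.{u} R) (n + 1)).obj (Opposite.op (ModuleCat.of R M))).obj N)

/-- `fdLE R M n` : the flat dimension of the `R`-module `M` is at most `n`,
expressed by the vanishing of `Tor_{n+1}(M, N)` for all `N`. -/
def fdLE (R : Type u) [CommRing R] (M : Type u) [AddCommGroup M] [Module R M] (n : ℕ) : Prop :=
  ∀ N : ModuleCat.{u} R,
    IsZero (((Tor' (ModuleCat.{u} R) (n + 1)).obj (ModuleCat.of R M)).obj N)

/-- A commutative ring `R` is strong `n`-perfect if every `R`-module of flat dimension
at most `n` has projective dimension at most `n`. -/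
def IsStrongNPerfect (R : Type u) [CommRing R] (n : ℕ) : Prop :=
  ∀ (M : Type u) [AddCommGroup M] [Module R M], fdLE R M n → pdLE R M n

/-!
Pure ideals are idempotent, so it suffices to find an element of `M` outside `M²`: `X` works,
since `M² ⊆ X²B` and `X` is a nonzero nonunit of the domain `B`.

For `Tor`, tensor a projective resolution `P` of `A/M` with `0 → M → A → A/M → 0`. As `A` is
flat, `H₁(P ⊗ A) = 0`, and `H₀(P ⊗ M) → H₀(P ⊗ A)` is the map `A/M ⊗ M → A/M ⊗ A`, which vanishes;
so the connecting map is an isomorphism `Tor₁(A/M, A/M) ≅ A/M ⊗ M ≅ M/M²`.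
-/

open MonoidalCategory

namespace HomologicalComplex

variable {C : Type*} [Category* C] [MonoidalCategory C] [Preadditive C] [MonoidalPreadditive C]
  {ι : Type*} {c : ComplexShape ι}

def tensorShortComplex (K : HomologicalComplex C c) (S : ShortComplex C) :
    ShortComplex (HomologicalComplex C c) :=
  ShortComplex.mk ((NatTrans.mapHomologicalComplex ((tensoringRight C).map S.f) c).app K)
    ((NatTrans.mapHomologicalComplex ((tensoringRight C).map S.g) c).app K)
    (by
      ext i
      show K.X i ◁ S.f ≫ K.X i ◁ S.g = 0
      rw [← MonoidalCategory.whiskerLeft_comp, S.zero, MonoidalPreadditive.whiskerLeft_zero])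

end HomologicalComplex

namespace ModuleCat

variable {R : Type u} [CommRing R] {ι : Type*} {c : ComplexShape ι}

lemma shortExact_tensorShortComplex (K : HomologicalComplex (ModuleCat.{u} R) c)
    [∀ i, Module.Flat R (K.X i)] {S : ShortComplex (ModuleCat.{u} R)} (hS : S.ShortExact) :
    (K.tensorShortComplex S).ShortExact :=
  HomologicalComplex.shortExact_of_degreewise_shortExact _ fun i =>
    hS.map_of_exact (tensorLeft (K.X i))

lemma exactAt_tensor_of_flat {K : HomologicalComplex (ModuleCat.{u} R) c} {i : ι}
    (hK : K.ExactAt i) (N : ModuleCat.{u} R) [Module.Flat R N] :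
    (((tensoringRight _).obj N).mapHomologicalComplex c |>.obj K).ExactAt i := by
  rw [HomologicalComplex.exactAt_iff] at hK ⊢
  exact Module.Flat.rTensor_shortComplex_exact N _ hK

instance {M : ModuleCat.{u} R} [Projective M] : Module.Flat R M :=
  have : Module.Projective R M := (IsProjective.iff_projective M).mpr ‹_›
  inferInstance

end ModuleCat

namespace CategoryTheory.ProjectiveResolution

variable {C D : Type*} [Category* C] [Category* D] [Abelian C] [Abelian D] {X : C}

lemma opcyclesMap_comp_fromLeftDerivedZero' (P : ProjectiveResolution X) {F G : C ⥤ D}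
    [F.Additive] [G.Additive] (α : F ⟶ G) :
    HomologicalComplex.opcyclesMap ((NatTrans.mapHomologicalComplex α _).app P.complex) 0 ≫
      P.fromLeftDerivedZero' G = P.fromLeftDerivedZero' F ≫ α.app X := by
  simp only [← cancel_epi (HomologicalComplex.pOpcycles _ _),
    HomologicalComplex.p_opcyclesMap_assoc, pOpcycles_comp_fromLeftDerivedZero',
    pOpcycles_comp_fromLeftDerivedZero'_assoc, NatTrans.mapHomologicalComplex_app_f]
  exact (α.naturality _).symm

end CategoryTheory.ProjectiveResolution

namespace ModuleCat

variable {R : Type u} [CommRing R] {X : ModuleCat.{u} R} {S : ShortComplex (ModuleCat.{u} R)}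
  (hS : S.ShortExact) [Module.Flat R S.X₂]

lemma isIso_δ_tensorShortComplex (P : ProjectiveResolution X) (hX : X ◁ S.f = 0) :
    IsIso ((shortExact_tensorShortComplex P.complex hS).δ 1 0 rfl) := by
  have hH₁ : IsZero ((P.complex.tensorShortComplex S).X₂.homology 1) :=
    (HomologicalComplex.exactAt_iff_isZero_homology _ _).mp
      (exactAt_tensor_of_flat (P.complex_exactAt_succ 0) S.X₂)
  have hH₀ : HomologicalComplex.homologyMap (P.complex.tensorShortComplex S).f 0 = 0 := by
    have : HomologicalComplex.opcyclesMap (P.complex.tensorShortComplex S).f 0 = 0 := by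
      refine (cancel_mono (P.fromLeftDerivedZero' ((tensoringRight _).obj S.X₂))).mp ?_
      exact (P.opcyclesMap_comp_fromLeftDerivedZero' ((tensoringRight _).map S.f)).trans
        (by
          rw [show ((tensoringRight _).map S.f).app X = X ◁ S.f from rfl, hX, comp_zero]
          exact zero_comp.symm)
    rw [← cancel_mono (HomologicalComplex.homologyι _ 0),
      HomologicalComplex.homologyι_naturality, this, comp_zero, zero_comp]
  have := ((shortExact_tensorShortComplex P.complex hS).homology_exact₃ 1 0 rfl).mono_g
    (hH₁.eq_of_src _ _)
  have := ((shortExact_tensorShortComplex P.complex hS).homology_exact₁ 1 0 rfl).epi_f hH₀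
  exact isIso_of_mono_of_epi _

def tor'OneIsoTensorOfShortExact (hX : X ◁ S.f = 0) :
    ((Tor' (ModuleCat.{u} R) 1).obj X).obj S.X₃ ≅ (X ⊗ S.X₁ : ModuleCat.{u} R) := by
  let P := CategoryTheory.projectiveResolution X
  have := isIso_δ_tensorShortComplex hS P hX
  let e₁ := P.isoLeftDerivedObj ((tensoringRight _).obj S.X₃) 1
  let e₂ := asIso ((shortExact_tensorShortComplex P.complex hS).δ 1 0 rfl)
  let e₃ := ChainComplex.isoHomologyι₀ (P.complex.tensorShortComplex S).X₁
  let e₄ := asIso (P.fromLeftDerivedZero' ((tensoringRight _).obj S.X₁))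
  exact e₁ ≪≫ e₂ ≪≫ e₃ ≪≫ e₄

end ModuleCat

namespace Ideal

variable {R : Type u} [CommRing R] (I : Ideal R)

abbrev moduleCatShortComplex : ShortComplex (ModuleCat.{u} R) :=
  ModuleCat.shortComplexOfCompEqZero I.subtype I.mkQ
    (by ext x; exact Ideal.Quotient.eq_zero_iff_mem.mpr x.2)

lemma shortExact_moduleCatShortComplex : I.moduleCatShortComplex.ShortExact :=
  ModuleCat.shortComplex_shortExact _ (LinearMap.exact_subtype_mkQ I) I.injective_subtype
    I.mkQ_surjective

lemma quotient_whiskerLeft_moduleCatShortComplex_f :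
    ModuleCat.of R (R ⧸ I) ◁ I.moduleCatShortComplex.f = 0 := by
  refine ModuleCat.hom_ext (TensorProduct.ext' fun x m => ?_)
  have hm : (m : R) • x = 0 :=
    Module.mem_annihilator.mp (by rw [Ideal.annihilator_quotient]; exact m.2) x
  calc x ⊗ₜ[R] (m : R) = x ⊗ₜ[R] ((m : R) • (1 : R)) := by rw [smul_eq_mul, mul_one]
    _ = 0 := by rw [← TensorProduct.smul_tmul, hm, TensorProduct.zero_tmul]

def torOneQuotientEquivCotangent :
    (((Tor' (ModuleCat.{u} R) 1).obj (ModuleCat.of R (R ⧸ I))).obj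
      (ModuleCat.of R (R ⧸ I))) ≃ₗ[R] I.Cotangent :=
  (ModuleCat.tor'OneIsoTensorOfShortExact I.shortExact_moduleCatShortComplex
    I.quotient_whiskerLeft_moduleCatShortComplex_f).toLinearEquiv ≪≫ₗ
    TensorProduct.quotTensorEquivQuotSMul I I

lemma notMem_sq_of_map_le_span {A B : Type*} [CommRing A] [CommRing B] [IsDomain B]
    (f : A →+* B) {M : Ideal A} {x : A} (hM : M.map f ≤ Ideal.span {f x}) (hx₀ : f x ≠ 0)
    (hx : ¬IsUnit (f x)) : x ∉ M ^ 2 := by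
  intro hxM
  have : f x ∈ Ideal.span {f x ^ 2} := by
    rw [← Ideal.span_singleton_pow]
    exact Ideal.pow_right_mono hM 2 (Ideal.map_pow f M 2 ▸ Ideal.mem_map_of_mem f hxM)
  have hdvd : f x * f x ∣ f x * 1 := by rwa [mul_one, ← sq, ← Ideal.mem_span_singleton]
  exact hx (isUnit_iff_dvd_one.mpr ((mul_dvd_mul_iff_left hx₀).mp hdvd))

end Ideal

/-- For `B = ℚ[X]_{(X)}` and `A = ℤ + XB`, the ideal `M = XB` of `A` is not pure;
more precisely `Tor₁^A(A/M, A/M) ≅ M/M²` is nonzero (note `A/M ≅ ℤ`). -/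
theorem xB_not_pure_ideal
    (P : Ideal (Polynomial ℚ)) (hP : P = Ideal.span {Polynomial.X}) [P.IsPrime]
    (A : Subring (Localization.AtPrime P))
    (hA : ∀ x : Localization.AtPrime P,
      x ∈ A ↔ ∃ n : ℤ, x - (n : Localization.AtPrime P) ∈
        P.map (algebraMap (Polynomial ℚ) (Localization.AtPrime P)))
    (M : Ideal A)
    (hM : ∀ y : A, y ∈ M ↔ (y : Localization.AtPrime P) ∈
        P.map (algebraMap (Polynomial ℚ) (Localization.AtPrime P))) :
    ¬ Module.Flat A (A ⧸ M) ∧ Nontrivial M.Cotangent ∧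
      Nonempty ((((Tor' (ModuleCat A) 1).obj (ModuleCat.of A (A ⧸ M))).obj
        (ModuleCat.of A (A ⧸ M))) ≃ₗ[A] M.Cotangent) := by
  set B := Localization.AtPrime P
  set t : B := algebraMap (Polynomial ℚ) B Polynomial.X
  have hXP : Polynomial.X ∈ P := hP ▸ Ideal.mem_span_singleton_self _
  have hspan : P.map (algebraMap (Polynomial ℚ) B) = Ideal.span {t} := by
    simpa only [Ideal.map_span, Set.image_singleton] using
      congrArg (Ideal.map (algebraMap (Polynomial ℚ) B)) hP
  have ht : t ∈ P.map (algebraMap (Polynomial ℚ) B) := hspan ▸ Ideal.mem_span_singleton_self t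
  let x : A := ⟨t, (hA t).mpr ⟨0, by simpa using ht⟩⟩
  have hx₀ : t ≠ 0 := (map_ne_zero_iff _ (IsLocalization.injective B
    P.primeCompl_le_nonZeroDivisors)).mpr Polynomial.X_ne_zero
  have hxu : ¬IsUnit t := by
    rw [IsLocalization.AtPrime.isUnit_to_map_iff B P, Ideal.mem_primeCompl_iff, not_not]
    exact hXP
  have hMle : M.map A.subtype ≤ Ideal.span {t} :=
    Ideal.map_le_iff_le_comap.mpr fun y hy => hspan ▸ (hM y).mp hy
  have hx2 : x ∉ M ^ 2 := Ideal.notMem_sq_of_map_le_span A.subtype hMle hx₀ hxu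
  have hidem : ¬IsIdempotentElem M := fun h => hx2 (by rw [sq, h.eq]; exact (hM x).mpr ht)
  exact ⟨fun _ => hidem M.isIdempotentElem_of_pure,
    not_subsingleton_iff_nontrivial.mp (mt M.cotangent_subsingleton_iff.mp hidem),
    ⟨M.torOneQuotientEquivCotangent⟩⟩
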